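/- Define operators U_α on V^{(ℓ)} by their action on the basis: U₁(η-e₁)^j = e^{πiℓ}(e₁-e₂)^{j-ℓ}(e₁-e₃)^{j-ℓ}(η-e₁)^{2ℓ-j}, U₂(η-e₂)^j = e^{πi(2ℓ-j)}(e₁-e₂)^{j-ℓ}(e₂-e₃)^{j-ℓ}(η-e₂)^{2ℓ-j}, U₃(η-e₃)^j = e^{-πiℓ}(e₁-e₃)^{j-ℓ}(e₂-e₃)^{j-ℓ}(η-e₃)^{2ℓ-j}. Then U_α² = (-1)^{2ℓ}·Id on V^{(ℓ)} for each α = 1,2,3. -/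

import Mathlib

open Complex

/-- The operator on `V^{(ℓ)} ≅ ℂ^{n+1}` (coordinates in the basis `(η-e_α)^j`,
`n = 2ℓ`) sending the `j`-th basis vector to `φ j` times the `(n-j)`-th. -/
noncomputable def Uop (n : ℕ) (φ : ℕ → ℂ) (c : Fin (n + 1) → ℂ) : Fin (n + 1) → ℂ :=
  fun k => φ (n - (k : ℕ)) * c (Fin.rev k)

/-- `U₁(η-e₁)^j = e^{πiℓ}(e₁-e₂)^{j-ℓ}(e₁-e₃)^{j-ℓ}(η-e₁)^{2ℓ-j}` in coordinates,
with `(e₁-e₂)^{j-ℓ} = s₁₂^{2j-n}` for a fixed square root `s₁₂² = e₁-e₂`. -/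
noncomputable def phi1 (n : ℕ) (s12 s13 : ℂ) (j : ℕ) : ℂ :=
  Complex.exp (Real.pi * Complex.I * n / 2) *
    s12 ^ (2 * (j : ℤ) - n) * s13 ^ (2 * (j : ℤ) - n)

/-- `U₂(η-e₂)^j = e^{πi(2ℓ-j)}(e₁-e₂)^{j-ℓ}(e₂-e₃)^{j-ℓ}(η-e₂)^{2ℓ-j}` in coordinates. -/
noncomputable def phi2 (n : ℕ) (s12 s23 : ℂ) (j : ℕ) : ℂ :=
  Complex.exp (Real.pi * Complex.I * ((n : ℂ) - j)) *
    s12 ^ (2 * (j : ℤ) - n) * s23 ^ (2 * (j : ℤ) - n)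

/-- `U₃(η-e₃)^j = e^{-πiℓ}(e₁-e₃)^{j-ℓ}(e₂-e₃)^{j-ℓ}(η-e₃)^{2ℓ-j}` in coordinates. -/
noncomputable def phi3 (n : ℕ) (s13 s23 : ℂ) (j : ℕ) : ℂ :=
  Complex.exp (-Real.pi * Complex.I * n / 2) *
    s13 ^ (2 * (j : ℤ) - n) * s23 ^ (2 * (j : ℤ) - n)

lemma Uop_Uop_eq_smul {n : ℕ} {φ : ℕ → ℂ} {a : ℂ} (h : ∀ k ≤ n, φ (n - k) * φ k = a)
    (c : Fin (n + 1) → ℂ) : Uop n φ (Uop n φ c) = a • c := by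
  funext k
  have hk : (k : ℕ) ≤ n := Nat.lt_succ_iff.mp k.isLt
  have hrev : (Fin.rev k : ℕ) = n - k := by rw [Fin.val_rev]; omega
  simp only [Uop, Fin.rev_rev, Pi.smul_apply, smul_eq_mul, hrev, Nat.sub_sub_self hk]
  rw [← mul_assoc, h _ hk]

lemma zpow_two_mul_sub_mul_zpow {s : ℂ} (hs : s ≠ 0) {n k : ℕ} (hk : k ≤ n) :
    s ^ (2 * ((n - k : ℕ) : ℤ) - n) * s ^ (2 * (k : ℤ) - n) = 1 := by
  rw [← zpow_add₀ hs, Nat.cast_sub hk]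
  ring_nf
  exact zpow_zero s

/-- The common shape of `phi1`, `phi2`, `phi3`: a phase times `(s t)^{2j-n}`. Reflecting
`j ↦ n - j` inverts `(s t)^{2j-n}`, so only the phases matter for `U²`. -/
lemma Uop_Uop_eq_smul_of_phase {n : ℕ} (p : ℕ → ℂ) {s t a : ℂ} (hs : s ≠ 0) (ht : t ≠ 0)
    (hp : ∀ k ≤ n, p (n - k) * p k = a) (c : Fin (n + 1) → ℂ) :
    Uop n (fun j => p j * s ^ (2 * (j : ℤ) - n) * t ^ (2 * (j : ℤ) - n))
      (Uop n (fun j => p j * s ^ (2 * (j : ℤ) - n) * t ^ (2 * (j : ℤ) - n)) c) = a • c := by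
  refine Uop_Uop_eq_smul (fun k hk => ?_) c
  calc _ = p (n - k) * p k * (s ^ (2 * ((n - k : ℕ) : ℤ) - n) * s ^ (2 * (k : ℤ) - n)) *
        (t ^ (2 * ((n - k : ℕ) : ℤ) - n) * t ^ (2 * (k : ℤ) - n)) := by ring
    _ = a := by
      rw [hp k hk, zpow_two_mul_sub_mul_zpow hs hk, zpow_two_mul_sub_mul_zpow ht hk, mul_one,
        mul_one]

lemma exp_pi_mul_I_mul_nat (n : ℕ) : exp (Real.pi * I * n) = (-1) ^ n := by
  rw [mul_comm, exp_nat_mul, exp_pi_mul_I]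

lemma exp_neg_pi_mul_I_mul_nat (n : ℕ) : exp (-(Real.pi * I * n)) = (-1) ^ n := by
  rw [exp_neg, exp_pi_mul_I_mul_nat, ← inv_pow, inv_neg_one]

theorem Uop_sq_general (n : ℕ) (s12 s13 s23 : ℂ)
    (h12 : s12 ≠ 0) (h13 : s13 ≠ 0) (h23 : s23 ≠ 0) :
    (∀ c : Fin (n + 1) → ℂ,
      Uop n (phi1 n s12 s13) (Uop n (phi1 n s12 s13) c) = ((-1 : ℂ) ^ n) • c) ∧
    (∀ c : Fin (n + 1) → ℂ,
      Uop n (phi2 n s12 s23) (Uop n (phi2 n s12 s23) c) = ((-1 : ℂ) ^ n) • c) ∧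
    (∀ c : Fin (n + 1) → ℂ,
      Uop n (phi3 n s13 s23) (Uop n (phi3 n s13 s23) c) = ((-1 : ℂ) ^ n) • c) := by
  refine ⟨Uop_Uop_eq_smul_of_phase _ h12 h13 fun k _ => ?_,
    Uop_Uop_eq_smul_of_phase _ h12 h23 fun k hk => ?_,
    Uop_Uop_eq_smul_of_phase _ h13 h23 fun k _ => ?_⟩
  · rw [← exp_add, ← exp_pi_mul_I_mul_nat]
    ring_nf
  · rw [← exp_add, ← exp_pi_mul_I_mul_nat, Nat.cast_sub hk]
    ring_nf
  · rw [← exp_add, ← exp_neg_pi_mul_I_mul_nat]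
    ring_nf

/-- `U_α² = (-1)^{2ℓ}·Id` on `V^{(ℓ)}` for each `α = 1,2,3` (with `n = 2ℓ`). -/
theorem Uop_sq (n : ℕ) (e1 e2 e3 s12 s13 s23 : ℂ)
    (hs12 : s12 ^ 2 = e1 - e2) (hs13 : s13 ^ 2 = e1 - e3) (hs23 : s23 ^ 2 = e2 - e3)
    (h12 : s12 ≠ 0) (h13 : s13 ≠ 0) (h23 : s23 ≠ 0) :
    (∀ c : Fin (n + 1) → ℂ,
      Uop n (phi1 n s12 s13) (Uop n (phi1 n s12 s13) c) = ((-1 : ℂ) ^ n) • c) ∧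
    (∀ c : Fin (n + 1) → ℂ,
      Uop n (phi2 n s12 s23) (Uop n (phi2 n s12 s23) c) = ((-1 : ℂ) ^ n) • c) ∧
    (∀ c : Fin (n + 1) → ℂ,
      Uop n (phi3 n s13 s23) (Uop n (phi3 n s13 s23) c) = ((-1 : ℂ) ^ n) • c) :=
  Uop_sq_general n s12 s13 s23 h12 h13 h23
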